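/- arXiv:2107.09774 — 3 statements merged into one kernel-verified Lean document; each statement's English description precedes it below -/
import Mathlib

section
/- The number of lattice paths from (0,0) to (M,N) with steps (1,1) and (-1,1) that never visit any point with x-coordinate less than 0 equals binom(N,(N-M)/2) - binom(N,(N-M)/2 - 1), for M ≥ 0, N ≥ M, and N ≡ M mod 2. -/
/-!
Deleting the last step of a path that stays in `x ≥ 0` and ends at `M ≥ 0` leaves such a path
ending at `M - 1` or `M + 1`, so the counts satisfy `c(N+1, M) = c(N, M-1) + c(N, M+1)`.
Writing `M = N - 2j`, the differences `binom N j - binom N (j-1)` obey the same recursion by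
Pascal's rule. The only place where the wall enters is `M = 0`, where `c(N, -1) = 0`; this
matches because then `2j = N + 1` and `binom N j = binom N (j-1)` by symmetry.
-/

open Finset

/-- The x-coordinate after the first `k` steps of a path encoded by `s : Fin N → Bool`
(`true` = step `(x,y) → (x+1,y+1)`, `false` = step `(x,y) → (x-1,y+1)`), starting at `x = 0`. -/
def pathPos {N : ℕ} (s : Fin N → Bool) (k : ℕ) : ℤ :=
  ∑ i ∈ Finset.univ.filter (fun i : Fin N => (i : ℕ) < k), (if s i then (1 : ℤ) else -1)

/-- Binomial coefficient `binom n k` with integer lower argument, `0` out of range. -/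
def ibinom (n : ℕ) (k : ℤ) : ℤ :=
  if 0 ≤ k then (n.choose k.toNat : ℤ) else 0

section PathPos

variable {N : ℕ}

lemma pathPos_of_length_le (s : Fin N → Bool) {k : ℕ} (hk : N ≤ k) :
    pathPos s k = pathPos s N := by
  simp only [pathPos]
  rw [filter_true_of_mem fun i _ => i.2.trans_le hk, filter_true_of_mem fun i _ => i.2]

lemma pathPos_length_le (s : Fin N → Bool) : pathPos s N ≤ N := by
  calc pathPos s N ≤ ∑ _i ∈ univ.filter (fun i : Fin N => (i : ℕ) < N), (1 : ℤ) :=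
        sum_le_sum fun i _ => by split <;> norm_num
    _ ≤ N := by simp

lemma pathPos_snoc (t : Fin N → Bool) (b : Bool) (k : ℕ) :
    pathPos (Fin.snoc t b : Fin (N + 1) → Bool) k =
      pathPos t k + if N < k then (if b then 1 else -1) else 0 := by
  simp only [pathPos, sum_filter, Fin.sum_univ_castSucc, Fin.snoc_castSucc, Fin.val_castSucc,
    Fin.snoc_last, Fin.val_last]

end PathPos

def IsWallPath {N : ℕ} (s : Fin N → Bool) (M : ℤ) : Prop :=
  pathPos s N = M ∧ ∀ k : ℕ, 0 ≤ pathPos s k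

noncomputable def wallPathCount (N : ℕ) (M : ℤ) : ℕ :=
  Nat.card {s : Fin N → Bool // IsWallPath s M}

lemma isWallPath_snoc_iff {N : ℕ} {M : ℤ} (hM : 0 ≤ M) (t : Fin N → Bool) (b : Bool) :
    IsWallPath (Fin.snoc t b : Fin (N + 1) → Bool) M ↔
      IsWallPath t (M - if b then 1 else -1) := by
  have hend : pathPos (Fin.snoc t b : Fin (N + 1) → Bool) (N + 1) =
      pathPos t N + if b then 1 else -1 := by
    rw [pathPos_snoc, if_pos N.lt_succ_self, pathPos_of_length_le t N.le_succ]
  have hprefix : ∀ k ≤ N, pathPos (Fin.snoc t b : Fin (N + 1) → Bool) k = pathPos t k := by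
    intro k hk
    rw [pathPos_snoc, if_neg hk.not_gt, add_zero]
  constructor
  · rintro ⟨hlast, hnonneg⟩
    refine ⟨by omega, fun k => ?_⟩
    rcases le_or_gt k N with hk | hk
    · exact hprefix k hk ▸ hnonneg k
    · rw [pathPos_of_length_le t hk.le, ← hprefix N le_rfl]
      exact hnonneg N
  · rintro ⟨hlast, hnonneg⟩
    refine ⟨by omega, fun k => ?_⟩
    rcases le_or_gt k N with hk | hk
    · exact (hprefix k hk).symm ▸ hnonneg k
    · rw [pathPos_of_length_le _ hk, hend]
      omega

lemma wallPathCount_succ {N : ℕ} {M : ℤ} (hM : 0 ≤ M) :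
    wallPathCount (N + 1) M = wallPathCount N (M - 1) + wallPathCount N (M + 1) := by
  have e : {s : Fin (N + 1) → Bool // IsWallPath s M} ≃
      Σ b : Bool, {t : Fin N → Bool // IsWallPath (Fin.snoc t b : Fin (N + 1) → Bool) M} :=
    (Equiv.subtypeEquiv (p := fun p => IsWallPath (Fin.snoc p.2 p.1 : Fin (N + 1) → Bool) M)
      (Fin.snocEquiv fun _ => Bool) fun _ => Iff.rfl).symm.trans
      (Equiv.subtypeProdEquivSigmaSubtype fun b t =>
        IsWallPath (Fin.snoc t b : Fin (N + 1) → Bool) M)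
  rw [wallPathCount, Nat.card_congr e, Nat.card_sigma, Fintype.sum_bool]
  simp only [isWallPath_snoc_iff hM, Bool.false_eq_true, if_false, if_true, sub_neg_eq_add]
  rfl

lemma wallPathCount_zero (M : ℤ) : wallPathCount 0 M = if M = 0 then 1 else 0 := by
  have hempty : ∀ s : Fin 0 → Bool, IsWallPath s M ↔ M = 0 := fun s => by
    simpa [IsWallPath, pathPos] using eq_comm
  simp only [wallPathCount, hempty]
  split_ifs with hM <;> simp [hM]

lemma wallPathCount_of_neg {N : ℕ} {M : ℤ} (hM : M < 0) : wallPathCount N M = 0 :=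
  have : IsEmpty {s : Fin N → Bool // IsWallPath s M} :=
    ⟨fun ⟨s, _, hnonneg⟩ => by have := hnonneg N; omega⟩
  Nat.card_of_isEmpty

lemma wallPathCount_of_length_lt {N : ℕ} {M : ℤ} (hM : N < M) : wallPathCount N M = 0 :=
  have : IsEmpty {s : Fin N → Bool // IsWallPath s M} :=
    ⟨fun ⟨s, hend, _⟩ => by have := pathPos_length_le s; omega⟩
  Nat.card_of_isEmpty

lemma ibinom_natCast (n m : ℕ) : ibinom n m = n.choose m := by
  simp [ibinom]

lemma ibinom_of_neg (n : ℕ) {k : ℤ} (hk : k < 0) : ibinom n k = 0 :=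
  if_neg hk.not_ge

lemma ibinom_succ (n : ℕ) (k : ℤ) : ibinom (n + 1) k = ibinom n k + ibinom n (k - 1) := by
  rcases lt_or_ge k 0 with hk | hk
  · simp [ibinom_of_neg _ hk, ibinom_of_neg _ (show k - 1 < 0 by omega)]
  lift k to ℕ using hk
  cases k with
  | zero => simp [ibinom]
  | succ m =>
    rw [Nat.cast_add_one, add_sub_cancel_right, ← Nat.cast_add_one, ibinom_natCast,
      ibinom_natCast, ibinom_natCast, Nat.choose_succ_succ', Nat.cast_add, add_comm]

lemma ibinom_sub_one_of_two_mul_eq {n : ℕ} {k : ℤ} (hk : 2 * k = n + 1) :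
    ibinom n (k - 1) = ibinom n k := by
  lift k to ℕ using (by omega)
  obtain ⟨m, rfl⟩ : ∃ m, k = m + 1 := Nat.exists_eq_add_one.mpr (by omega)
  have hn : n = m + 1 + m := by omega
  push_cast
  rw [add_sub_cancel_right, ← Nat.cast_add_one, ibinom_natCast, ibinom_natCast, hn,
    Nat.choose_symm_add]

theorem wallPathCount_eq_ibinom_sub (N : ℕ) {j : ℤ} (hj : 2 * j ≤ N) :
    (wallPathCount N (N - 2 * j) : ℤ) = ibinom N j - ibinom N (j - 1) := by
  induction N generalizing j with
  | zero =>
    rcases (show j < 0 ∨ j = 0 by omega) with hj | rfl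
    · rw [wallPathCount_of_length_lt (by omega), ibinom_of_neg _ hj,
        ibinom_of_neg _ (by omega), sub_zero, Nat.cast_zero]
    · simp [wallPathCount_zero, ibinom]
  | succ N ih =>
    have hstep := wallPathCount_succ (N := N) (M := (N + 1 : ℕ) - 2 * j) (by omega)
    rw [show ((N + 1 : ℕ) : ℤ) - 2 * j - 1 = N - 2 * j by push_cast; ring,
      show ((N + 1 : ℕ) : ℤ) - 2 * j + 1 = N - 2 * (j - 1) by push_cast; ring] at hstep
    rw [hstep, Nat.cast_add, ih (j := j - 1) (by omega), ibinom_succ, ibinom_succ]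
    rcases (show 2 * j ≤ N ∨ 2 * j = N + 1 by omega) with hj | hj
    · rw [ih hj]
      ring
    · rw [wallPathCount_of_neg (by omega), ibinom_sub_one_of_two_mul_eq hj]
      ring

theorem wall_path_count_general (M N : ℕ) (h2 : N % 2 = M % 2) :
    (Nat.card {s : Fin N → Bool //
        pathPos s N = M ∧ ∀ k : ℕ, 0 ≤ pathPos s k} : ℤ) =
      ibinom N (((N : ℤ) - M) / 2) - ibinom N (((N : ℤ) - M) / 2 - 1) := by
  have hM : (M : ℤ) = N - 2 * (((N : ℤ) - M) / 2) := by omega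
  have hcount := wallPathCount_eq_ibinom_sub N (j := ((N : ℤ) - M) / 2) (by omega)
  rwa [← hM] at hcount

/-- The number of lattice paths from `(0,0)` to `(M,N)` never visiting `x < 0`
equals `binom N ((N-M)/2) - binom N ((N-M)/2 - 1)`. -/
theorem wall_path_count (M N : ℕ) (h1 : M ≤ N) (h2 : N % 2 = M % 2) :
    (Nat.card {s : Fin N → Bool //
        pathPos s N = M ∧ ∀ k : ℕ, 0 ≤ pathPos s k} : ℤ) =
      ibinom N (((N : ℤ) - M) / 2) - ibinom N (((N : ℤ) - M) / 2 - 1) :=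
  wall_path_count_general M N h2
end

section
/- The number of lattice paths from (0,0) to (M,N) with steps (1,1) and (-1,1) that never visit any point with x-coordinate greater than b (where b ≥ 0) equals binom(N,(N-M)/2) - binom(N,(N-M)/2 + b + 1), for M ≤ b and N ≡ M mod 2. -/
open Finset

lemma pathPos_expand {N : ℕ} (s : Fin N → Bool) (k : ℕ) :
    pathPos s k = ∑ i : Fin N, if (i : ℕ) < k then (if s i then (1:ℤ) else -1) else 0 := by
  rw [pathPos, Finset.sum_filter]

lemma pathPos_stable {N : ℕ} (s : Fin N → Bool) {k : ℕ} (h : N ≤ k) :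
    pathPos s k = pathPos s N := by
  rw [pathPos_expand, pathPos_expand]
  apply Finset.sum_congr rfl
  intro i _
  have hi : (i : ℕ) < N := i.isLt
  rw [if_pos (by omega), if_pos hi]

lemma pathPos_snoc_le {N : ℕ} (t : Fin N → Bool) (c : Bool) {k : ℕ} (hk : k ≤ N) :
    pathPos (Fin.snoc t c) k = pathPos t k := by
  rw [pathPos_expand, pathPos_expand, Fin.sum_univ_castSucc]
  have hlast : ¬ ((Fin.last N : ℕ) < k) := by
    simp only [Fin.val_last]; omega
  rw [if_neg hlast, add_zero]
  apply Finset.sum_congr rfl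
  intro i _
  simp [Fin.snoc_castSucc]

lemma pathPos_snoc_top {N : ℕ} (t : Fin N → Bool) (c : Bool) :
    pathPos (Fin.snoc t c) (N + 1) = pathPos t N + (if c then (1:ℤ) else -1) := by
  rw [pathPos_expand, pathPos_expand, Fin.sum_univ_castSucc]
  congr 1
  · apply Finset.sum_congr rfl
    intro i _
    have hi : (i : ℕ) < N := i.isLt
    simp only [Fin.coe_castSucc, Fin.snoc_castSucc]
    rw [if_pos (by omega), if_pos hi]
  · simp [Fin.val_last, Fin.snoc_last]

lemma init_end {N : ℕ} (s : Fin (N+1) → Bool) :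
    pathPos s (N + 1) = pathPos (Fin.init s) N + (if s (Fin.last N) then (1:ℤ) else -1) := by
  conv_lhs => rw [← Fin.snoc_init_self s]
  rw [pathPos_snoc_top]

lemma init_cond {N : ℕ} {b : ℤ} (s : Fin (N+1) → Bool) (h : ∀ k, pathPos s k ≤ b) :
    ∀ k, pathPos (Fin.init s) k ≤ b := by
  intro k
  rcases le_or_gt k N with hk | hk
  · have : pathPos (Fin.init s) k = pathPos s k := by
      conv_rhs => rw [← Fin.snoc_init_self s]
      rw [pathPos_snoc_le _ _ hk]
    rw [this]; exact h k
  · rw [pathPos_stable _ (by omega : N ≤ k)]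
    have : pathPos (Fin.init s) N = pathPos s N := by
      conv_rhs => rw [← Fin.snoc_init_self s]
      rw [pathPos_snoc_le _ _ (le_refl N)]
    rw [this]; exact h N

lemma snoc_cond {N : ℕ} {b : ℤ} (t : Fin N → Bool) (c : Bool)
    (hM : pathPos t N + (if c then (1:ℤ) else -1) ≤ b)
    (h : ∀ k, pathPos t k ≤ b) : ∀ k, pathPos (Fin.snoc t c) k ≤ b := by
  intro k
  rcases le_or_gt k N with hk | hk
  · rw [pathPos_snoc_le _ _ hk]; exact h k
  · rw [pathPos_stable _ (by omega : N + 1 ≤ k), pathPos_snoc_top]; exact hM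

def stepEquiv (b M : ℤ) (hM : M ≤ b) (N : ℕ) :
    {s : Fin (N+1) → Bool // pathPos s (N+1) = M ∧ ∀ k, pathPos s k ≤ b} ≃
    ({t : Fin N → Bool // pathPos t N = M - 1 ∧ ∀ k, pathPos t k ≤ b} ⊕
     {t : Fin N → Bool // pathPos t N = M + 1 ∧ ∀ k, pathPos t k ≤ b}) where
  toFun s :=
    if hc : s.1 (Fin.last N) = true then
      Sum.inl ⟨Fin.init s.1, by
        have he := s.2.1
        rw [init_end, hc, if_pos rfl] at he
        omega, init_cond s.1 s.2.2⟩
    else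
      Sum.inr ⟨Fin.init s.1, by
        have he := s.2.1
        rw [init_end] at he
        rw [if_neg hc] at he
        omega, init_cond s.1 s.2.2⟩
  invFun x :=
    match x with
    | Sum.inl t => ⟨Fin.snoc t.1 true, by
        rw [pathPos_snoc_top, t.2.1]; simp, by
        apply snoc_cond t.1 true _ t.2.2
        rw [t.2.1]; simp; omega⟩
    | Sum.inr t => ⟨Fin.snoc t.1 false, by
        rw [pathPos_snoc_top, t.2.1]; simp, by
        apply snoc_cond t.1 false _ t.2.2
        rw [t.2.1]; simp; omega⟩
  left_inv s := by
    by_cases hc : s.1 (Fin.last N) = true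
    · simp only [dif_pos hc]
      apply Subtype.ext
      simp only
      rw [← hc, Fin.snoc_init_self]
    · simp only [dif_neg hc]
      apply Subtype.ext
      simp only
      have : s.1 (Fin.last N) = false := by
        cases h : s.1 (Fin.last N) <;> simp_all
      rw [← this, Fin.snoc_init_self]
  right_inv x := by
    rcases x with t | t
    · simp only
      rw [dif_pos (by rw [Fin.snoc_last])]
      congr 1
      apply Subtype.ext
      simp [Fin.init_snoc]
    · simp only
      rw [dif_neg (by rw [Fin.snoc_last]; simp)]
      congr 1
      apply Subtype.ext
      simp [Fin.init_snoc]

lemma card_rec (b M : ℤ) (N : ℕ) (hM : M ≤ b) :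
    Nat.card {s : Fin (N+1) → Bool // pathPos s (N+1) = M ∧ ∀ k, pathPos s k ≤ b}
    = Nat.card {t : Fin N → Bool // pathPos t N = M - 1 ∧ ∀ k, pathPos t k ≤ b}
    + Nat.card {t : Fin N → Bool // pathPos t N = M + 1 ∧ ∀ k, pathPos t k ≤ b} := by
  rw [Nat.card_congr (stepEquiv b M hM N), Nat.card_sum]

lemma ibinom_pascal (n : ℕ) (k : ℤ) : ibinom (n+1) k = ibinom n k + ibinom n (k-1) := by
  unfold ibinom
  by_cases h : 0 ≤ k
  · by_cases h1 : 0 ≤ k - 1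
    · rw [if_pos h, if_pos h, if_pos h1]
      obtain ⟨m, rfl⟩ : ∃ m : ℕ, k = (m : ℤ) + 1 := ⟨(k-1).toNat, by omega⟩
      have e1 : ((m:ℤ) + 1).toNat = m + 1 := by omega
      have e2 : ((m:ℤ) + 1 - 1).toNat = m := by omega
      rw [e1, e2]
      push_cast [Nat.choose_succ_succ]
      ring
    · have hk : k = 0 := by omega
      subst hk
      norm_num
  · rw [if_neg h, if_neg h, if_neg (by omega)]
    norm_num

lemma ibinom_symm (n : ℕ) (j : ℤ) : ibinom n j = ibinom n (n - j) := by
  unfold ibinom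
  by_cases h : 0 ≤ j
  · by_cases h2 : j ≤ (n : ℤ)
    · rw [if_pos h, if_pos (by omega)]
      have e : ((n : ℤ) - j).toNat = n - j.toNat := by omega
      rw [e, Nat.choose_symm (by omega)]
    · rw [if_pos h]
      rw [if_neg (by omega)]
      have : n < j.toNat := by omega
      rw [Nat.choose_eq_zero_of_lt this]
      norm_num
  · rw [if_neg h, if_pos (by omega)]
    have : n < ((n : ℤ) - j).toNat := by omega
    rw [Nat.choose_eq_zero_of_lt this]
    norm_num

lemma ibinom_zero_ne (j : ℤ) (h : j ≠ 0) : ibinom 0 j = 0 := by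
  unfold ibinom
  by_cases h0 : 0 ≤ j
  · rw [if_pos h0, Nat.choose_eq_zero_of_lt (by omega)]
    norm_num
  · rw [if_neg h0]

def G (b : ℤ) (N : ℕ) (M : ℤ) : ℤ :=
  if M ≤ b ∧ ((N : ℤ) - M) % 2 = 0 then
    ibinom N (((N : ℤ) - M) / 2) - ibinom N (((N : ℤ) - M) / 2 + b + 1)
  else 0

lemma G_rec (b M : ℤ) (hb : 0 ≤ b) (hM : M ≤ b) (N : ℕ) :
    G b (N+1) M = G b N (M-1) + G b N (M+1) := by
  unfold G
  by_cases hp : (((N : ℤ) + 1) - M) % 2 = 0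
  · obtain ⟨k, hk⟩ : ∃ k : ℤ, (N : ℤ) + 1 - M = 2 * k := ⟨((N:ℤ)+1-M)/2, by omega⟩
    have d1 : (((N:ℕ)+1 : ℤ) - M) / 2 = k := by push_cast; omega
    have d2 : ((N : ℤ) - (M-1)) / 2 = k := by omega
    have d3 : ((N : ℤ) - (M+1)) / 2 = k - 1 := by omega
    by_cases hM1 : M + 1 ≤ b
    · rw [if_pos ⟨hM, by push_cast; omega⟩, if_pos ⟨by omega, by omega⟩,
        if_pos ⟨hM1, by omega⟩]
      push_cast
      rw [d2, d3]
      have d1' : ((N : ℤ) + 1 - M) / 2 = k := by omega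
      rw [d1', ibinom_pascal, ibinom_pascal]
      have e1 : k + b + 1 - 1 = k + b := by ring
      have e2 : k - 1 + b + 1 = k + b := by ring
      rw [e1, e2]
      ring
    · have hMb : M = b := by omega
      rw [if_pos ⟨hM, by push_cast; omega⟩, if_pos ⟨by omega, by omega⟩,
        if_neg (by intro hcon; omega)]
      push_cast
      have d1' : ((N : ℤ) + 1 - M) / 2 = k := by omega
      rw [d1', d2, ibinom_pascal, ibinom_pascal]
      have e1 : k + b + 1 - 1 = k + b := by ring
      rw [e1]
      have hsym : ibinom N (k - 1) = ibinom N (k + b) := by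
        rw [ibinom_symm N (k-1)]
        congr 1
        omega
      rw [hsym]
      ring
  · rw [if_neg (by intro hcon; push_cast at hcon; omega),
      if_neg (by intro hcon; omega), if_neg (by intro hcon; omega)]
    ring

lemma key (b : ℤ) (hb : 0 ≤ b) : ∀ (N : ℕ) (M : ℤ),
    (Nat.card {s : Fin N → Bool // pathPos s N = M ∧ ∀ k, pathPos s k ≤ b} : ℤ) = G b N M := by
  intro N
  induction N with
  | zero =>
    intro M
    rcases eq_or_ne M 0 with rfl | hM
    · have hu : ∀ (s : Fin 0 → Bool) (k : ℕ), pathPos s k = 0 := by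
        intro s k
        rw [pathPos_expand]
        exact Finset.sum_of_isEmpty _
      haveI : Unique {s : Fin 0 → Bool // pathPos s 0 = 0 ∧ ∀ k, pathPos s k ≤ b} :=
        { default := ⟨fun i => i.elim0, by rw [hu], fun k => by rw [hu]; exact hb⟩
          uniq := fun s => Subtype.ext (funext fun i => i.elim0) }
      rw [Nat.card_unique]
      unfold G
      rw [if_pos ⟨hb, by norm_num⟩]
      have h2 : (((0:ℕ):ℤ) - 0) / 2 = 0 := by norm_num
      rw [h2]
      rw [ibinom_zero_ne (0 + b + 1) (by omega)]
      norm_num [ibinom]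
    · haveI : IsEmpty {s : Fin 0 → Bool // pathPos s 0 = M ∧ ∀ k, pathPos s k ≤ b} := by
        constructor
        rintro ⟨s, hend, -⟩
        rw [pathPos_expand] at hend
        rw [Finset.sum_of_isEmpty] at hend
        exact hM hend.symm
      rw [Nat.card_of_isEmpty]
      unfold G
      split_ifs with h
      · obtain ⟨hMb, hpar⟩ := h
        push_cast at hpar ⊢
        rcases lt_trichotomy M 0 with hlt | rfl | hgt
        · rw [ibinom_zero_ne _ (by omega), ibinom_zero_ne _ (by omega)]
          norm_num
        · exact absurd rfl hM
        · rw [ibinom_zero_ne _ (by omega), ibinom_zero_ne _ (by omega)]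
          norm_num
      · norm_num
  | succ N ih =>
    intro M
    by_cases hM : M ≤ b
    · rw [card_rec b M N hM]
      push_cast
      rw [ih (M-1), ih (M+1), G_rec b M hb hM N]
    · haveI : IsEmpty {s : Fin (N+1) → Bool // pathPos s (N+1) = M ∧ ∀ k, pathPos s k ≤ b} := by
        constructor
        rintro ⟨s, hend, hle⟩
        exact hM (hend ▸ hle (N+1))
      rw [Nat.card_of_isEmpty]
      unfold G
      rw [if_neg (by intro hcon; exact hM hcon.1)]
      norm_num


/-- The number of lattice paths from `(0,0)` to `(M,N)` never visiting `x > b` (for `b ≥ 0`)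
equals `binom N ((N-M)/2) - binom N ((N-M)/2 + b + 1)`. -/
theorem right_wall_path_count (b M : ℤ) (N : ℕ) (hb : 0 ≤ b) (hM : M ≤ b)
    (h2 : (N : ℤ) ≡ M [ZMOD 2]) :
    (Nat.card {s : Fin N → Bool //
        pathPos s N = M ∧ ∀ k : ℕ, pathPos s k ≤ b} : ℤ) =
      ibinom N (((N : ℤ) - M) / 2) - ibinom N (((N : ℤ) - M) / 2 + b + 1) := by
  have hd : (2 : ℤ) ∣ M - (N : ℤ) := h2.dvd
  have hpar : ((N : ℤ) - M) % 2 = 0 := by omega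
  rw [key b hb N M]
  unfold G
  rw [if_pos ⟨hM, hpar⟩]
end

section
/- Define for j ≥ 2 and k ≥ 0: P_j(k) = Σ_{i=0}^{⌊j/2⌋} binom(j-2, 2i)·binom(k-i+j-2, j-2) and Q_j(k) = Σ_{i=0}^{⌊j/2⌋} binom(j-2, 2i+1)·binom(k-i+j-2, j-2), where binom(a,b)=0 when b<0, b>a, or a<0. Then Q_{j+1}(k) = Σ_{n=0}^{k} P_j(n) + Σ_{n=0}^{k} Q_j(n). -/
open Finset

/-- Binomial coefficient `binom a b` of integers, equal to `0` when `a < 0`, `b < 0`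
or `b > a`. -/
def B (a b : ℤ) : ℤ :=
  if 0 ≤ a ∧ 0 ≤ b then (a.toNat.choose b.toNat : ℤ) else 0

/-- `P_j(k) = Σ_{i=0}^{⌊j/2⌋} binom(j-2, 2i) · binom(k-i+j-2, j-2)`. -/
def P (j : ℕ) (k : ℤ) : ℤ :=
  ∑ i ∈ Finset.range (j / 2 + 1),
    B ((j : ℤ) - 2) (2 * i) * B (k - i + j - 2) ((j : ℤ) - 2)

/-- `Q_j(k) = Σ_{i=0}^{⌊j/2⌋} binom(j-2, 2i+1) · binom(k-i+j-2, j-2)`. -/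
def Q (j : ℕ) (k : ℤ) : ℤ :=
  ∑ i ∈ Finset.range (j / 2 + 1),
    B ((j : ℤ) - 2) (2 * i + 1) * B (k - i + j - 2) ((j : ℤ) - 2)

/-! Summing the Pascal rule `P_j(n) + Q_j(n) = Σ_i binom(j-1, 2i+1) binom(n-i+j-2, j-2)` over
`0 ≤ n ≤ k` and applying the hockey-stick identity in `n` to each inner binomial gives
`Σ_i binom(j-1, 2i+1) binom(k-i+j-1, j-1)`, which is `Q_{j+1}(k)`: the lower limit `n = 0`
contributes nothing because `binom(j-2-i, j-1) = 0`. -/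

lemma B_eq_zero_of_lt {a b : ℤ} (h : a < b) : B a b = 0 := by
  unfold B
  split_ifs
  · exact_mod_cast Nat.choose_eq_zero_of_lt (by omega)
  · rfl

lemma B_succ_succ (a : ℤ) {b : ℤ} (hb : 0 ≤ b) : B (a + 1) (b + 1) = B a b + B a (b + 1) := by
  obtain ha | rfl | ha := lt_trichotomy a (-1)
  · simp [B, show ¬0 ≤ a + 1 by omega, show ¬0 ≤ a by omega]
  · simp [B, show (b + 1).toNat = b.toNat + 1 by omega]
  · simp only [B, show 0 ≤ a + 1 by omega, show 0 ≤ a by omega, show 0 ≤ b + 1 by omega, hb,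
      and_self, if_true, show (a + 1).toNat = a.toNat + 1 by omega,
      show (b + 1).toNat = b.toNat + 1 by omega, Nat.choose_succ_succ]
    push_cast
    ring

lemma sum_Icc_B_add {r c : ℤ} (hr : 0 ≤ r) (hc : c ≤ r) (k : ℤ) :
    ∑ n ∈ Icc 0 k, B (n + c) r = B (k + c + 1) (r + 1) := by
  rcases lt_or_ge k 0 with hk | hk
  · rw [Icc_eq_empty (by omega), sum_empty, B_eq_zero_of_lt (by omega)]
  induction k, hk using Int.leInduction with
  | base => simpa [B_eq_zero_of_lt (show c < r + 1 by omega)] using (B_succ_succ c hr).symm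
  | succ k hk ih =>
    rw [← insert_Icc_right_eq_Icc_add_one (by omega), sum_insert (by simp), ih,
      show k + 1 + c + 1 = k + c + 1 + 1 by ring, B_succ_succ (k + c + 1) hr, add_right_comm k 1 c]

lemma P_add_Q (j : ℕ) (n : ℤ) :
    P j n + Q j n = ∑ i ∈ range (j / 2 + 1),
      B ((j : ℤ) - 1) (2 * i + 1) * B (n - i + j - 2) ((j : ℤ) - 2) := by
  rw [P, Q, ← sum_add_distrib]
  refine sum_congr rfl fun i _ => ?_
  rw [← add_mul, show (j : ℤ) - 1 = (j : ℤ) - 2 + 1 by ring, B_succ_succ _ (by positivity)]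

lemma sum_Icc_P_add_Q {j : ℕ} (hj : 2 ≤ j) (k : ℤ) :
    ∑ n ∈ Icc 0 k, (P j n + Q j n) = ∑ i ∈ range (j / 2 + 1),
      B ((j : ℤ) - 1) (2 * i + 1) * B (k - i + j - 1) ((j : ℤ) - 1) := by
  simp_rw [P_add_Q]
  rw [sum_comm]
  refine sum_congr rfl fun i _ => ?_
  have hockey := sum_Icc_B_add (r := (j : ℤ) - 2) (c := (j : ℤ) - 2 - i) (by omega) (by omega) k
  rw [← mul_sum]
  congr 1
  convert hockey using 2 <;> ring_nf

lemma Q_succ (j : ℕ) (k : ℤ) :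
    Q (j + 1) k = ∑ i ∈ range (j / 2 + 1),
      B ((j : ℤ) - 1) (2 * i + 1) * B (k - i + j - 1) ((j : ℤ) - 1) := by
  rw [Q]
  symm
  refine sum_subset_zero_on_sdiff (range_subset_range.mpr (by omega)) ?_ fun i _ => ?_
  · intro i hi
    rw [mem_sdiff, mem_range, mem_range] at hi
    rw [B_eq_zero_of_lt (by omega), zero_mul]
  · push_cast
    ring_nf

theorem Q_recurrence_general (j : ℕ) (k : ℤ) (hj : 2 ≤ j) :
    Q (j + 1) k = (∑ n ∈ Finset.Icc (0 : ℤ) k, P j n) + ∑ n ∈ Finset.Icc (0 : ℤ) k, Q j n := by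
  rw [← sum_add_distrib, sum_Icc_P_add_Q hj, Q_succ]

/-- The recurrence `Q_{j+1}(k) = Σ_{n=0}^{k} P_j(n) + Σ_{n=0}^{k} Q_j(n)`. -/
theorem Q_recurrence (j : ℕ) (k : ℤ) (hj : 2 ≤ j) (hk : 0 ≤ k) :
    Q (j + 1) k = (∑ n ∈ Finset.Icc (0 : ℤ) k, P j n) + ∑ n ∈ Finset.Icc (0 : ℤ) k, Q j n :=
  Q_recurrence_general j k hj
end
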